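/- arXiv:2310.16638 — 3 statements merged into one kernel-verified Lean document; each statement's English description precedes it below -/
import Mathlib

section
/- Double robustness, case (i) (correct regression function, arbitrary weight): for every nonnegative bounded measurable r† : 𝒳 → ℝ and every bounded measurable g : 𝒳 → ℝ, the population DR risk with f† = f₀ satisfies R̈(g; f₀, r†) = ∫_𝒳 (f₀(x) − g(x))² dq(x) + ∫_{𝒳×ℝ} (y − f₀(x))² r†(x) dP(x,y), where the second term does not depend on g. -/
/-!
For each covariate `x`, `(y - g x)² - (f₀ x - g x)² = (y - f₀ x)² + 2 (f₀ x - g x) (y - f₀ x)`,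
and the cross term integrates to zero against `κ x` because `f₀ x` is the mean of `κ x`.
So the inner integrals of the two sides over `κ x` agree for every `x`; bounded outcomes make
both integrands integrable for `P = p ⊗ₘ κ`, and integrating over `p` gives the theorem, the
`q`-term being common to both sides.
-/

open MeasureTheory ProbabilityTheory Set

theorem integral_sq_sub_sub_sq_sub_integral {Ω : Type*} [MeasurableSpace Ω] {μ : Measure Ω}
    [IsProbabilityMeasure μ] {X : Ω → ℝ} (hX : MemLp X 2 μ) (a : ℝ) :
    ∫ ω, ((X ω - a) ^ 2 - (∫ ω', X ω' ∂μ - a) ^ 2) ∂μ = ∫ ω, (X ω - ∫ ω', X ω' ∂μ) ^ 2 ∂μ := by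
  set m := ∫ ω', X ω' ∂μ
  have hX_int : Integrable X μ := hX.integrable one_le_two
  have hcentered : Integrable (fun ω => X ω - m) μ := hX_int.sub (integrable_const m)
  have hcentered_sq : Integrable (fun ω => (X ω - m) ^ 2) μ :=
    (hX.sub (memLp_const m)).integrable_sq
  calc ∫ ω, ((X ω - a) ^ 2 - (m - a) ^ 2) ∂μ
      = ∫ ω, ((X ω - m) ^ 2 + 2 * (m - a) * (X ω - m)) ∂μ := by
        congr 1; ext ω; ring
    _ = ∫ ω, (X ω - m) ^ 2 ∂μ + 2 * (m - a) * ∫ ω, (X ω - m) ∂μ := by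
        rw [integral_add hcentered_sq (hcentered.const_mul _), integral_const_mul]
    _ = ∫ ω, (X ω - m) ^ 2 ∂μ := by
        rw [integral_sub hX_int (integrable_const m), integral_const]
        simp [m]

theorem sq_sub_le_sq_add {a b A B : ℝ} (ha : |a| ≤ A) (hb : |b| ≤ B) :
    (a - b) ^ 2 ≤ (A + B) ^ 2 := by
  rw [← sq_abs]
  exact pow_le_pow_left₀ (abs_nonneg _) ((abs_sub _ _).trans (add_le_add ha hb)) 2

theorem integrable_compProd_mul_of_abs_le {α β : Type*} [MeasurableSpace α] [MeasurableSpace β]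
    {μ : Measure α} [IsFiniteMeasure μ] {κ : Kernel α β} [IsFiniteKernel κ] {s : Set β}
    (hs : MeasurableSet s) (hκ : ∀ a, ∀ᵐ b ∂κ a, b ∈ s)
    {φ : α × β → ℝ} (hφ : Measurable φ) {K : ℝ} (hφK : ∀ a, ∀ b ∈ s, |φ (a, b)| ≤ K)
    {w : α → ℝ} (hw : Measurable w) {W : ℝ} (hwW : ∀ a, |w a| ≤ W) :
    Integrable (fun z => φ z * w z.1) (μ.compProd κ) := by
  refine Integrable.of_bound (hφ.mul (hw.comp measurable_fst)).aestronglyMeasurable (K * W) ?_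
  filter_upwards [Measure.ae_compProd_of_ae_ae (measurable_snd hs) (ae_of_all _ hκ)] with z hz
  rw [Real.norm_eq_abs, abs_mul]
  exact mul_le_mul (hφK z.1 z.2 hz) (hwW z.1) (abs_nonneg _) ((abs_nonneg _).trans (hφK z.1 z.2 hz))

theorem dr_risk_correct_regression_function_general
    {𝒳 : Type*} [MeasurableSpace 𝒳]
    (p : Measure 𝒳) [IsProbabilityMeasure p]
    (r₀ : 𝒳 → ℝ)
    (κ : Kernel 𝒳 ℝ) [IsMarkovKernel κ]
    (C : ℝ) (hκ_supp : ∀ x, ∀ᵐ y ∂(κ x), y ∈ Set.Icc (-C) C)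
    (f₀ : 𝒳 → ℝ) (hf₀ : ∀ x, f₀ x = ∫ y, y ∂(κ x))
    (rdag : 𝒳 → ℝ) (hrdag_meas : Measurable rdag) (hrdag_nonneg : ∀ x, 0 ≤ rdag x)
    (Crdag : ℝ) (hrdag_bdd : ∀ x, rdag x ≤ Crdag)
    (g : 𝒳 → ℝ) (hg_meas : Measurable g)
    (Cg : ℝ) (hg_bdd : ∀ x, |g x| ≤ Cg) :
    (∫ z : 𝒳 × ℝ, ((z.2 - g z.1) ^ 2 - (f₀ z.1 - g z.1) ^ 2) * rdag z.1
          ∂(p.compProd κ)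
        + ∫ x, (f₀ x - g x) ^ 2 ∂(p.withDensity (fun x => ENNReal.ofReal (r₀ x))))
      = (∫ x, (f₀ x - g x) ^ 2 ∂(p.withDensity (fun x => ENNReal.ofReal (r₀ x))))
          + ∫ z : 𝒳 × ℝ, (z.2 - f₀ z.1) ^ 2 * rdag z.1 ∂(p.compProd κ) := by
  have hκ_L2 : ∀ x, MemLp (fun y => y) 2 (κ x) := fun x =>
    MemLp.of_bound measurable_id.aestronglyMeasurable C
      (by filter_upwards [hκ_supp x] with y hy using abs_le.2 hy)
  have hf₀_meas : Measurable f₀ := by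
    rw [funext hf₀]; exact stronglyMeasurable_id.integral_kernel.measurable
  have hf₀_mem : ∀ x, f₀ x ∈ Icc (-C) C := fun x => hf₀ x ▸
    (convex_Icc _ _).integral_mem isClosed_Icc (hκ_supp x) ((hκ_L2 x).integrable one_le_two)
  have hrdag_abs : ∀ x, |rdag x| ≤ Crdag := fun x =>
    (abs_of_nonneg (hrdag_nonneg x)).trans_le (hrdag_bdd x)
  have hsq_le : ∀ x, ∀ y ∈ Icc (-C) C, (y - g x) ^ 2 ≤ (C + Cg) ^ 2 := fun x y hy =>
    sq_sub_le_sq_add (abs_le.2 hy) (hg_bdd x)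
  have hint_dr := integrable_compProd_mul_of_abs_le (μ := p) measurableSet_Icc hκ_supp
    (φ := fun z => (z.2 - g z.1) ^ 2 - (f₀ z.1 - g z.1) ^ 2) (by fun_prop)
    (fun x y hy => abs_sub_le_of_nonneg_of_le (sq_nonneg _) (hsq_le x y hy) (sq_nonneg _)
      (hsq_le x (f₀ x) (hf₀_mem x))) hrdag_meas hrdag_abs
  have hint_res := integrable_compProd_mul_of_abs_le (μ := p) measurableSet_Icc hκ_supp
    (φ := fun z => (z.2 - f₀ z.1) ^ 2) (by fun_prop)
    (fun x y hy => (abs_of_nonneg (sq_nonneg _)).trans_le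
      (sq_sub_le_sq_add (abs_le.2 hy) (abs_le.2 (hf₀_mem x)))) hrdag_meas hrdag_abs
  rw [add_comm, Measure.integral_compProd hint_dr, Measure.integral_compProd hint_res]
  congr 1
  refine integral_congr_ae (ae_of_all _ fun x => ?_)
  simp only [integral_mul_const]
  rw [hf₀ x, integral_sq_sub_sub_sq_sub_integral (hκ_L2 x)]

/-- Double robustness, case (i) (correct regression function, arbitrary weight):
for every nonnegative bounded measurable `r†` and bounded measurable `g`, the
population DR risk with `f† = f₀` equals
`∫ (f₀ − g)² dq + ∫ (y − f₀ x)² r†(x) dP`, where the second term does not depend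
on `g`. -/
theorem dr_risk_correct_regression_function
    {𝒳 : Type*} [MeasurableSpace 𝒳]
    (p : Measure 𝒳) [IsProbabilityMeasure p]
    (r₀ : 𝒳 → ℝ) (hr₀_meas : Measurable r₀) (hr₀_nonneg : ∀ x, 0 ≤ r₀ x)
    (Cr : ℝ) (hr₀_bdd : ∀ x, r₀ x ≤ Cr)
    (hr₀_int : ∫ x, r₀ x ∂p = 1)
    (κ : Kernel 𝒳 ℝ) [IsMarkovKernel κ]
    (C : ℝ) (hC : 0 < C) (hκ_supp : ∀ x, ∀ᵐ y ∂(κ x), y ∈ Set.Icc (-C) C)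
    (f₀ : 𝒳 → ℝ) (hf₀ : ∀ x, f₀ x = ∫ y, y ∂(κ x))
    (rdag : 𝒳 → ℝ) (hrdag_meas : Measurable rdag) (hrdag_nonneg : ∀ x, 0 ≤ rdag x)
    (Crdag : ℝ) (hrdag_bdd : ∀ x, rdag x ≤ Crdag)
    (g : 𝒳 → ℝ) (hg_meas : Measurable g)
    (Cg : ℝ) (hg_bdd : ∀ x, |g x| ≤ Cg) :
    (∫ z : 𝒳 × ℝ, ((z.2 - g z.1) ^ 2 - (f₀ z.1 - g z.1) ^ 2) * rdag z.1
          ∂(p.compProd κ)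
        + ∫ x, (f₀ x - g x) ^ 2 ∂(p.withDensity (fun x => ENNReal.ofReal (r₀ x))))
      = (∫ x, (f₀ x - g x) ^ 2 ∂(p.withDensity (fun x => ENNReal.ofReal (r₀ x))))
          + ∫ z : 𝒳 × ℝ, (z.2 - f₀ z.1) ^ 2 * rdag z.1 ∂(p.compProd κ) :=
  dr_risk_correct_regression_function_general p r₀ κ C hκ_supp f₀ hf₀ rdag hrdag_meas hrdag_nonneg
    Crdag hrdag_bdd g hg_meas Cg hg_bdd
end

section
/- Double robustness, case (i), minimizer equivalence: let Θ be a set, (g_β)_{β∈Θ} a family of bounded measurable functions 𝒳 → ℝ, and r† : 𝒳 → ℝ any nonnegative bounded measurable function (not necessarily equal to the true density ratio r₀). Then β* ∈ Θ minimizes β ↦ R̈(g_β; f₀, r†) over Θ if and only if β* minimizes β ↦ ∫_𝒳 (f₀(x) − g_β(x))² dq(x) over Θ. -/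
/-!
Taking `f† = f₀`, the weighted term of the DR risk splits as
`((y - g)² - (f₀ - g)²) r† = (y² - f₀²) r† - 2 (y - f₀) g r†`. The first summand does not
involve `g`, and the second integrates to zero against `P = p ⊗ κ` because the residual
`y - f₀(x)` has conditional mean zero given `x`. So for every `β` the DR risk is the test risk
`∫ (f₀ - g β)² dq` plus a constant, and both have the same minimizers.
-/

open MeasureTheory ProbabilityTheory Set

noncomputable def kernelMean {α : Type*} [MeasurableSpace α] (κ : Kernel α ℝ) (x : α) : ℝ :=
  ∫ y, y ∂κ x

section

variable {α : Type*} [MeasurableSpace α] {κ : Kernel α ℝ} {C : ℝ}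

lemma measurable_kernelMean [IsSFiniteKernel κ] : Measurable (kernelMean κ) :=
  (measurable_snd.stronglyMeasurable.integral_kernel_prod_right' (κ := κ)).measurable

lemma abs_kernelMean_le [IsMarkovKernel κ] (hκ : ∀ x, ∀ᵐ y ∂κ x, y ∈ Icc (-C) C) (x : α) :
    |kernelMean κ x| ≤ C := by
  simpa [kernelMean] using
    norm_integral_le_of_norm_le_const (f := fun y => y) ((hκ x).mono fun _ hy => abs_le.mpr hy)

lemma ae_compProd_abs_snd_le (μ : Measure α) (hκ : ∀ x, ∀ᵐ y ∂κ x, y ∈ Icc (-C) C) :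
    ∀ᵐ z ∂(μ ⊗ₘ κ), |z.2| ≤ C :=
  Measure.ae_compProd_of_ae_ae (measurableSet_le measurable_snd.abs measurable_const)
    (.of_forall fun x => (hκ x).mono fun _ hy => abs_le.mpr hy)

lemma integral_compProd_sub_kernelMean_mul_eq_zero (μ : Measure α) [SFinite μ]
    [IsMarkovKernel κ] (hκ : ∀ x, Integrable (fun y => y) (κ x)) {φ : α → ℝ}
    (hint : Integrable (fun z : α × ℝ => (z.2 - kernelMean κ z.1) * φ z.1) (μ ⊗ₘ κ)) :
    ∫ z, (z.2 - kernelMean κ z.1) * φ z.1 ∂(μ ⊗ₘ κ) = 0 := by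
  rw [Measure.integral_compProd hint]
  refine integral_eq_zero_of_ae (.of_forall fun x => ?_)
  have hres_mean : ∫ y, (y - kernelMean κ x) ∂κ x = 0 := by
    rw [integral_sub (hκ x) (integrable_const _)]
    simp [kernelMean]
  simp [integral_mul_const, hres_mean]

lemma integral_compProd_sq_sub_sq_mul_eq (μ : Measure α) [IsFiniteMeasure μ] [IsMarkovKernel κ]
    (hκ : ∀ x, ∀ᵐ y ∂κ x, y ∈ Icc (-C) C) {w h : α → ℝ} {Cw Ch : ℝ}
    (hw : Measurable w) (hw_bdd : ∀ x, |w x| ≤ Cw)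
    (hh : Measurable h) (hh_bdd : ∀ x, |h x| ≤ Ch) :
    ∫ z, ((z.2 - h z.1) ^ 2 - (kernelMean κ z.1 - h z.1) ^ 2) * w z.1 ∂(μ ⊗ₘ κ)
      = ∫ z, (z.2 ^ 2 - kernelMean κ z.1 ^ 2) * w z.1 ∂(μ ⊗ₘ κ) := by
  have hm := measurable_kernelMean (κ := κ)
  have hY := ae_compProd_abs_snd_le μ hκ
  have hM := abs_kernelMean_le hκ
  have hsq : Integrable (fun z : α × ℝ => (z.2 ^ 2 - kernelMean κ z.1 ^ 2) * w z.1) (μ ⊗ₘ κ) := by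
    refine .of_bound (by fun_prop) ((C ^ 2 + C ^ 2) * Cw) (hY.mono fun z hz => ?_)
    rw [Real.norm_eq_abs, abs_mul]
    gcongr
    · exact (abs_sub _ _).trans (by rw [abs_pow, abs_pow]; gcongr; exact hM _)
    · exact hw_bdd _
  have hres : Integrable (fun z : α × ℝ => (z.2 - kernelMean κ z.1) * (h z.1 * w z.1))
      (μ ⊗ₘ κ) := by
    refine .of_bound (by fun_prop) ((C + C) * (Ch * Cw)) (hY.mono fun z hz => ?_)
    rw [Real.norm_eq_abs, abs_mul, abs_mul]
    have hC : 0 ≤ C := (abs_nonneg _).trans hz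
    have hCh : 0 ≤ Ch := (abs_nonneg _).trans (hh_bdd z.1)
    gcongr
    exacts [(abs_sub _ _).trans (add_le_add hz (hM _)), hh_bdd _, hw_bdd _]
  have hκ_int : ∀ x, Integrable (fun y => y) (κ x) := fun x =>
    .of_bound measurable_id.aestronglyMeasurable C
      ((hκ x).mono fun _ hy => abs_le.mpr hy)
  calc ∫ z, ((z.2 - h z.1) ^ 2 - (kernelMean κ z.1 - h z.1) ^ 2) * w z.1 ∂(μ ⊗ₘ κ)
      = ∫ z, ((z.2 ^ 2 - kernelMean κ z.1 ^ 2) * w z.1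
          - 2 * ((z.2 - kernelMean κ z.1) * (h z.1 * w z.1))) ∂(μ ⊗ₘ κ) := by
        congr 1; ext z; ring
    _ = ∫ z, (z.2 ^ 2 - kernelMean κ z.1 ^ 2) * w z.1 ∂(μ ⊗ₘ κ) := by
        rw [integral_sub hsq (hres.const_mul 2), integral_const_mul,
          integral_compProd_sub_kernelMean_mul_eq_zero μ hκ_int (φ := fun x => h x * w x) hres,
          mul_zero, sub_zero]

end

theorem dr_risk_minimizer_iff_test_regression_minimizer_general
    {𝒳 : Type*} [MeasurableSpace 𝒳]
    (p : Measure 𝒳) [IsProbabilityMeasure p]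
    (r₀ : 𝒳 → ℝ)
    (κ : Kernel 𝒳 ℝ) [IsMarkovKernel κ]
    (C : ℝ) (hκ_supp : ∀ x, ∀ᵐ y ∂(κ x), y ∈ Set.Icc (-C) C)
    (f₀ : 𝒳 → ℝ) (hf₀ : ∀ x, f₀ x = ∫ y, y ∂(κ x))
    (rdag : 𝒳 → ℝ) (hrdag_meas : Measurable rdag) (hrdag_nonneg : ∀ x, 0 ≤ rdag x)
    (Crdag : ℝ) (hrdag_bdd : ∀ x, rdag x ≤ Crdag)
    {Θ : Type*} (g : Θ → 𝒳 → ℝ) (hg_meas : ∀ β, Measurable (g β))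
    (hg_bdd : ∀ β, ∃ Cg, ∀ x, |g β x| ≤ Cg)
    (βstar : Θ) :
    (∀ β : Θ,
        (∫ z : 𝒳 × ℝ, ((z.2 - g βstar z.1) ^ 2 - (f₀ z.1 - g βstar z.1) ^ 2) * rdag z.1
              ∂(p.compProd κ)
            + ∫ x, (f₀ x - g βstar x) ^ 2
              ∂(p.withDensity (fun x => ENNReal.ofReal (r₀ x))))
          ≤ (∫ z : 𝒳 × ℝ, ((z.2 - g β z.1) ^ 2 - (f₀ z.1 - g β z.1) ^ 2) * rdag z.1
              ∂(p.compProd κ)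
            + ∫ x, (f₀ x - g β x) ^ 2
              ∂(p.withDensity (fun x => ENNReal.ofReal (r₀ x)))))
      ↔ (∀ β : Θ,
        ∫ x, (f₀ x - g βstar x) ^ 2 ∂(p.withDensity (fun x => ENNReal.ofReal (r₀ x)))
          ≤ ∫ x, (f₀ x - g β x) ^ 2
            ∂(p.withDensity (fun x => ENNReal.ofReal (r₀ x)))) := by
  obtain rfl : f₀ = kernelMean κ := funext hf₀
  have hrdag_abs : ∀ x, |rdag x| ≤ Crdag := fun x =>
    (abs_of_nonneg (hrdag_nonneg x)).trans_le (hrdag_bdd x)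
  have hconst : ∀ β,
      ∫ z : 𝒳 × ℝ, ((z.2 - g β z.1) ^ 2 - (kernelMean κ z.1 - g β z.1) ^ 2) * rdag z.1
          ∂(p.compProd κ)
        = ∫ z : 𝒳 × ℝ, (z.2 ^ 2 - kernelMean κ z.1 ^ 2) * rdag z.1 ∂(p.compProd κ) :=
    fun β => (hg_bdd β).elim fun _ hCg =>
      integral_compProd_sq_sub_sq_mul_eq p hκ_supp hrdag_meas hrdag_abs (hg_meas β) hCg
  simp only [hconst, add_le_add_iff_left]

/-- Double robustness, case (i), minimizer equivalence: with `f† = f₀` and an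
arbitrary nonnegative bounded measurable weight `r†`, `β*` minimizes
`β ↦ R̈(g β; f₀, r†)` over `Θ` iff `β*` minimizes `β ↦ ∫ (f₀ − g β)² dq` over `Θ`. -/
theorem dr_risk_minimizer_iff_test_regression_minimizer
    {𝒳 : Type*} [MeasurableSpace 𝒳]
    (p : Measure 𝒳) [IsProbabilityMeasure p]
    (r₀ : 𝒳 → ℝ) (hr₀_meas : Measurable r₀) (hr₀_nonneg : ∀ x, 0 ≤ r₀ x)
    (Cr : ℝ) (hr₀_bdd : ∀ x, r₀ x ≤ Cr)
    (hr₀_int : ∫ x, r₀ x ∂p = 1)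
    (κ : Kernel 𝒳 ℝ) [IsMarkovKernel κ]
    (C : ℝ) (hC : 0 < C) (hκ_supp : ∀ x, ∀ᵐ y ∂(κ x), y ∈ Set.Icc (-C) C)
    (f₀ : 𝒳 → ℝ) (hf₀ : ∀ x, f₀ x = ∫ y, y ∂(κ x))
    (rdag : 𝒳 → ℝ) (hrdag_meas : Measurable rdag) (hrdag_nonneg : ∀ x, 0 ≤ rdag x)
    (Crdag : ℝ) (hrdag_bdd : ∀ x, rdag x ≤ Crdag)
    {Θ : Type*} (g : Θ → 𝒳 → ℝ) (hg_meas : ∀ β, Measurable (g β))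
    (hg_bdd : ∀ β, ∃ Cg, ∀ x, |g β x| ≤ Cg)
    (βstar : Θ) :
    (∀ β : Θ,
        (∫ z : 𝒳 × ℝ, ((z.2 - g βstar z.1) ^ 2 - (f₀ z.1 - g βstar z.1) ^ 2) * rdag z.1
              ∂(p.compProd κ)
            + ∫ x, (f₀ x - g βstar x) ^ 2
              ∂(p.withDensity (fun x => ENNReal.ofReal (r₀ x))))
          ≤ (∫ z : 𝒳 × ℝ, ((z.2 - g β z.1) ^ 2 - (f₀ z.1 - g β z.1) ^ 2) * rdag z.1
              ∂(p.compProd κ)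
            + ∫ x, (f₀ x - g β x) ^ 2
              ∂(p.withDensity (fun x => ENNReal.ofReal (r₀ x)))))
      ↔ (∀ β : Θ,
        ∫ x, (f₀ x - g βstar x) ^ 2 ∂(p.withDensity (fun x => ENNReal.ofReal (r₀ x)))
          ≤ ∫ x, (f₀ x - g β x) ^ 2
            ∂(p.withDensity (fun x => ENNReal.ofReal (r₀ x)))) :=
  dr_risk_minimizer_iff_test_regression_minimizer_general p r₀ κ C hκ_supp f₀ hf₀ rdag hrdag_meas
    hrdag_nonneg Crdag hrdag_bdd g hg_meas hg_bdd βstar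
end

section
/- Neyman-orthogonality (product-bias) identity for the DR score: for all bounded measurable h, f̂ : 𝒳 → ℝ and every nonnegative bounded measurable r̂ : 𝒳 → ℝ, ∫_{𝒳×ℝ} h(x)(y − f̂(x)) r̂(x) dP(x,y) + ∫_𝒳 h(x)(f̂(x) − f₀(x)) dq(x) − ∫_{𝒳×ℝ} h(x)(y − f₀(x)) r₀(x) dP(x,y) = ∫_𝒳 h(x) (f₀(x) − f̂(x)) (r̂(x) − r₀(x)) dp(x). -/
/-!
Disintegrating `P = p ⊗ κ` and integrating out the outcome replaces `y` by its conditional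
mean `f₀ x`. Hence the `P`-integral of `g(x)(y − c(x))` is the `p`-integral of
`g(x)(f₀(x) − c(x))`: the term with the true regression function vanishes, the term with
`f̂` becomes `∫ h r̂ (f₀ − f̂) dp`, and writing `dq = r₀ dp` turns the plug-in term into
`∫ h r₀ (f̂ − f₀) dp`; the two combine into the product of the two nuisance errors.
-/

open MeasureTheory ProbabilityTheory Set

section CompProd

variable {𝒳 : Type*} [MeasurableSpace 𝒳] {p : Measure 𝒳}

lemma MeasureTheory.MemLp.comp_fst_compProd {β E : Type*} [MeasurableSpace β]
    [NormedAddCommGroup E] [SFinite p] {κ : Kernel 𝒳 β} [IsMarkovKernel κ] {q : ENNReal}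
    {g : 𝒳 → E} (hg : MemLp g q p) :
    MemLp (fun z : 𝒳 × β => g z.1) q (p.compProd κ) := by
  rw [← Measure.fst_compProd p κ] at hg
  exact (memLp_map_measure_iff hg.1 measurable_fst.aemeasurable).1 hg

lemma memLp_top_snd_compProd [SFinite p] {κ : Kernel 𝒳 ℝ} [IsSFiniteKernel κ] {C : ℝ}
    (hκ : ∀ x, ∀ᵐ y ∂κ x, y ∈ Icc (-C) C) :
    MemLp (fun z : 𝒳 × ℝ => z.2) ⊤ (p.compProd κ) := by
  refine memLp_top_of_bound measurable_snd.aestronglyMeasurable C ?_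
  have hsupp : ∀ᵐ z ∂(p.compProd κ), z.2 ∈ Icc (-C) C :=
    (Measure.ae_compProd_iff (measurable_snd measurableSet_Icc)).2 (ae_of_all _ hκ)
  filter_upwards [hsupp] with z hz
  exact abs_le.2 hz

lemma integral_compProd_mul_sub [IsFiniteMeasure p] {κ : Kernel 𝒳 ℝ} [IsMarkovKernel κ]
    {C : ℝ} (hκ : ∀ x, ∀ᵐ y ∂κ x, y ∈ Icc (-C) C) {g c : 𝒳 → ℝ}
    (hg : MemLp g ⊤ p) (hc : MemLp c ⊤ p) :
    ∫ z, g z.1 * (z.2 - c z.1) ∂(p.compProd κ) = ∫ x, g x * ((∫ y, y ∂κ x) - c x) ∂p := by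
  have hint : Integrable (fun z : 𝒳 × ℝ => g z.1 * (z.2 - c z.1)) (p.compProd κ) :=
    (((memLp_top_snd_compProd hκ).sub hc.comp_fst_compProd).mul'
      hg.comp_fst_compProd).integrable le_top
  rw [Measure.integral_compProd hint]
  refine integral_congr_ae (ae_of_all _ fun x => ?_)
  have hid : Integrable (fun y : ℝ => y) (κ x) :=
    Integrable.of_bound aestronglyMeasurable_id C (by
      filter_upwards [hκ x] with y hy
      exact abs_le.2 hy)
  simp only [integral_const_mul, integral_sub hid (integrable_const _), integral_const,
    probReal_univ, one_smul]

end CompProd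

lemma abs_integral_id_le_of_ae_mem_Icc {ν : Measure ℝ} [IsProbabilityMeasure ν] {C : ℝ}
    (h : ∀ᵐ y ∂ν, y ∈ Icc (-C) C) : |∫ y, y ∂ν| ≤ C := by
  rw [← Real.norm_eq_abs]
  calc ‖∫ y, y ∂ν‖ ≤ ∫ _, C ∂ν :=
        norm_integral_le_of_norm_le (integrable_const C) (h.mono fun y hy => abs_le.2 hy)
    _ = C := by simp

theorem dr_score_product_bias_identity_general
    {𝒳 : Type*} [MeasurableSpace 𝒳]
    (p : Measure 𝒳) [IsProbabilityMeasure p]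
    (r₀ : 𝒳 → ℝ) (hr₀_meas : Measurable r₀) (hr₀_nonneg : ∀ x, 0 ≤ r₀ x)
    (Cr : ℝ) (hr₀_bdd : ∀ x, r₀ x ≤ Cr)
    (κ : Kernel 𝒳 ℝ) [IsMarkovKernel κ]
    (C : ℝ) (hκ_supp : ∀ x, ∀ᵐ y ∂(κ x), y ∈ Set.Icc (-C) C)
    (f₀ : 𝒳 → ℝ) (hf₀ : ∀ x, f₀ x = ∫ y, y ∂(κ x))
    (h : 𝒳 → ℝ) (hh_meas : Measurable h)
    (Ch : ℝ) (hh_bdd : ∀ x, |h x| ≤ Ch)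
    (fhat : 𝒳 → ℝ) (hfhat_meas : Measurable fhat)
    (Cf : ℝ) (hfhat_bdd : ∀ x, |fhat x| ≤ Cf)
    (rhat : 𝒳 → ℝ) (hrhat_meas : Measurable rhat) (hrhat_nonneg : ∀ x, 0 ≤ rhat x)
    (Crhat : ℝ) (hrhat_bdd : ∀ x, rhat x ≤ Crhat) :
    (∫ z : 𝒳 × ℝ, h z.1 * (z.2 - fhat z.1) * rhat z.1 ∂(p.compProd κ))
        + (∫ x, h x * (fhat x - f₀ x) ∂(p.withDensity (fun x => ENNReal.ofReal (r₀ x))))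
        - (∫ z : 𝒳 × ℝ, h z.1 * (z.2 - f₀ z.1) * r₀ z.1 ∂(p.compProd κ))
      = ∫ x, h x * (f₀ x - fhat x) * (rhat x - r₀ x) ∂p := by
  have memLp_of_abs_le :
      ∀ {f : 𝒳 → ℝ} {B : ℝ}, Measurable f → (∀ x, |f x| ≤ B) → MemLp f ⊤ p :=
    fun hf hB => memLp_top_of_bound hf.aestronglyMeasurable _ (ae_of_all _ hB)
  have hh := memLp_of_abs_le hh_meas hh_bdd
  have hfhat := memLp_of_abs_le hfhat_meas hfhat_bdd
  have hrhat := memLp_of_abs_le hrhat_meas fun x =>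
    (abs_of_nonneg (hrhat_nonneg x)).trans_le (hrhat_bdd x)
  have hr₀ := memLp_of_abs_le hr₀_meas fun x =>
    (abs_of_nonneg (hr₀_nonneg x)).trans_le (hr₀_bdd x)
  have hf₀_mem : MemLp f₀ ⊤ p :=
    memLp_of_abs_le (funext hf₀ ▸ stronglyMeasurable_id.integral_kernel.measurable)
    fun x => hf₀ x ▸ abs_integral_id_le_of_ae_mem_Icc (hκ_supp x)
  have hhrhat : MemLp (fun x => h x * rhat x) ⊤ p := hrhat.mul' hh
  have hhr₀ : MemLp (fun x => h x * r₀ x) ⊤ p := hr₀.mul' hh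
  have bias_hat : ∫ z, h z.1 * (z.2 - fhat z.1) * rhat z.1 ∂(p.compProd κ)
      = ∫ x, h x * rhat x * (f₀ x - fhat x) ∂p := by
    simpa only [mul_right_comm, ← hf₀] using
      integral_compProd_mul_sub (κ := κ) hκ_supp hhrhat hfhat
  have bias_true : ∫ z, h z.1 * (z.2 - f₀ z.1) * r₀ z.1 ∂(p.compProd κ) = 0 := by
    simpa only [mul_right_comm, ← hf₀, sub_self, mul_zero, integral_zero] using
      integral_compProd_mul_sub (κ := κ) hκ_supp hhr₀ hf₀_mem
  have plug_in : ∫ x, h x * (fhat x - f₀ x) ∂(p.withDensity fun x => ENNReal.ofReal (r₀ x))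
      = ∫ x, h x * r₀ x * (fhat x - f₀ x) ∂p := by
    rw [integral_withDensity_eq_integral_toReal_smul hr₀_meas.ennreal_ofReal
      (ae_of_all _ fun _ => ENNReal.ofReal_lt_top)]
    exact integral_congr_ae (ae_of_all _ fun x => by
      simp only [ENNReal.toReal_ofReal (hr₀_nonneg x), smul_eq_mul]; ring)
  rw [bias_hat, bias_true, plug_in, sub_zero, ← integral_add]
  · exact integral_congr_ae (ae_of_all _ fun x => by ring)
  · exact ((hf₀_mem.sub hfhat).mul' hhrhat).integrable le_top
  · exact ((hfhat.sub hf₀_mem).mul' hhr₀).integrable le_top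

/-- Neyman-orthogonality (product-bias) identity for the DR score: the bias of the
DR score at nuisance estimates `(f̂, r̂)` equals
`∫ h (f₀ − f̂)(r̂ − r₀) dp`. -/
theorem dr_score_product_bias_identity
    {𝒳 : Type*} [MeasurableSpace 𝒳]
    (p : Measure 𝒳) [IsProbabilityMeasure p]
    (r₀ : 𝒳 → ℝ) (hr₀_meas : Measurable r₀) (hr₀_nonneg : ∀ x, 0 ≤ r₀ x)
    (Cr : ℝ) (hr₀_bdd : ∀ x, r₀ x ≤ Cr)
    (hr₀_int : ∫ x, r₀ x ∂p = 1)
    (κ : Kernel 𝒳 ℝ) [IsMarkovKernel κ]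
    (C : ℝ) (hC : 0 < C) (hκ_supp : ∀ x, ∀ᵐ y ∂(κ x), y ∈ Set.Icc (-C) C)
    (f₀ : 𝒳 → ℝ) (hf₀ : ∀ x, f₀ x = ∫ y, y ∂(κ x))
    (h : 𝒳 → ℝ) (hh_meas : Measurable h)
    (Ch : ℝ) (hh_bdd : ∀ x, |h x| ≤ Ch)
    (fhat : 𝒳 → ℝ) (hfhat_meas : Measurable fhat)
    (Cf : ℝ) (hfhat_bdd : ∀ x, |fhat x| ≤ Cf)
    (rhat : 𝒳 → ℝ) (hrhat_meas : Measurable rhat) (hrhat_nonneg : ∀ x, 0 ≤ rhat x)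
    (Crhat : ℝ) (hrhat_bdd : ∀ x, rhat x ≤ Crhat) :
    (∫ z : 𝒳 × ℝ, h z.1 * (z.2 - fhat z.1) * rhat z.1 ∂(p.compProd κ))
        + (∫ x, h x * (fhat x - f₀ x) ∂(p.withDensity (fun x => ENNReal.ofReal (r₀ x))))
        - (∫ z : 𝒳 × ℝ, h z.1 * (z.2 - f₀ z.1) * r₀ z.1 ∂(p.compProd κ))
      = ∫ x, h x * (f₀ x - fhat x) * (rhat x - r₀ x) ∂p :=
  dr_score_product_bias_identity_general p r₀ hr₀_meas hr₀_nonneg Cr hr₀_bdd κ C hκ_supp f₀ hf₀ h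
    hh_meas Ch hh_bdd fhat hfhat_meas Cf hfhat_bdd rhat hrhat_meas hrhat_nonneg Crhat hrhat_bdd
end
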